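/- If A is an n×n totally nonnegative and nonsingular matrix, then for every x ∈ ℝⁿ, s⁺(Ax) ≤ s⁺(x). -/

import Mathlib

open scoped Classical

def TotallyNonneg {n : ℕ} (A : Matrix (Fin n) (Fin n) ℝ) : Prop :=
  ∀ (k : ℕ) (r c : Fin k → Fin n), StrictMono r → StrictMono c →
    0 ≤ (A.submatrix r c).det

def TotallyPos {n : ℕ} (A : Matrix (Fin n) (Fin n) ℝ) : Prop :=
  ∀ (k : ℕ) (r c : Fin k → Fin n), StrictMono r → StrictMono c →
    0 < (A.submatrix r c).det

noncomputable def countSignChanges : List ℝ → ℕ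
  | a :: b :: t => (if a * b < 0 then 1 else 0) + countSignChanges (b :: t)
  | _ => 0

noncomputable def sMinus {n : ℕ} (y : Fin n → ℝ) : ℕ :=
  countSignChanges ((List.ofFn y).filter (fun x => decide (x ≠ 0)))

noncomputable def sPlus {n : ℕ} (y : Fin n → ℝ) : ℕ :=
  sSup {k | ∃ z : Fin n → ℝ,
    (∀ i, (y i ≠ 0 → z i = y i) ∧ (y i = 0 → z i = 1 ∨ z i = -1)) ∧
    countSignChanges (List.ofFn z) = k}

def MatIrreducible {n : ℕ} (A : Matrix (Fin n) (Fin n) ℝ) : Prop :=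
  ∀ S : Set (Fin n), S.Nonempty → S ≠ Set.univ →
    ∃ i ∈ S, ∃ j ∉ S, A i j ≠ 0


/-!
Let `z` realize `s⁺(A x)`. Moving `x` to `x' = x + δ A⁻¹ v`, where `v` carries the entries of `z`
at the zeros of `A x`, gives `A x'` the strict sign pattern of `z`, while for small `δ > 0` the
nonzero entries of `x` keep their signs. Completing the zeros of `x` by the signs of `x'` gives a
`z'` admissible for `s⁺(x)`; if `z'` had fewer sign changes than `z`, then `s⁻(x') < s⁻(A x')`,
against the variation diminishing property of totally nonnegative matrices.

That property is proved by induction on the number of sign blocks of `x'`: collapsing each block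
into one column of a totally nonnegative matrix `D` gives `D W = A x'` on the alternating rows,
with `W` strictly alternating. The alternation forces every maximal minor of `D` to vanish, and
moving `W` along a kernel vector of `D` kills one of its entries, which merges two blocks.
-/

open Matrix Filter Topology

lemma countSignChanges_le_length : ∀ l : List ℝ, countSignChanges l ≤ l.length
  | [] | [_] => Nat.zero_le _
  | a :: b :: l => by
    have := countSignChanges_le_length (b :: l)
    rw [countSignChanges]
    simp only [List.length_cons] at *
    split <;> omega

lemma countSignChanges_cons_ofFn (a : ℝ) {n : ℕ} (z : Fin (n + 1) → ℝ) :
    countSignChanges (a :: List.ofFn z) =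
      (if a * z 0 < 0 then 1 else 0) + countSignChanges (List.ofFn z) := by
  rw [List.ofFn_succ]
  rfl

lemma countSignChanges_ofFn {n : ℕ} (z : Fin (n + 1) → ℝ) :
    countSignChanges (List.ofFn z) =
      ∑ t : Fin n, if z t.castSucc * z t.succ < 0 then 1 else 0 := by
  induction n with
  | zero => rfl
  | succ n ih =>
    rw [List.ofFn_succ, countSignChanges_cons_ofFn, ih fun i => z i.succ, Fin.sum_univ_succ]
    rfl

def IsSignCompletion {n : ℕ} (y z : Fin n → ℝ) : Prop :=
  ∀ i, (y i ≠ 0 → z i = y i) ∧ (y i = 0 → z i = 1 ∨ z i = -1)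

section sPlus

variable {n : ℕ} {y z : Fin n → ℝ}

lemma IsSignCompletion.ne_zero (h : IsSignCompletion y z) (i : Fin n) : z i ≠ 0 := by
  by_cases hy : y i = 0
  · rcases (h i).2 hy with h' | h' <;> norm_num [h']
  · rwa [(h i).1 hy]

lemma le_sPlus (h : IsSignCompletion y z) : countSignChanges (List.ofFn z) ≤ sPlus y :=
  le_csSup ⟨n, by rintro _ ⟨z, -, rfl⟩; simpa using countSignChanges_le_length (List.ofFn z)⟩
    ⟨z, h, rfl⟩

lemma sPlus_le {m : ℕ} (h : ∀ z, IsSignCompletion y z → countSignChanges (List.ofFn z) ≤ m) :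
    sPlus y ≤ m := by
  refine csSup_le ⟨_, fun i => if y i = 0 then 1 else y i, fun i => ?_, rfl⟩ ?_
  · exact ⟨fun hy => if_neg hy, fun hy => Or.inl (if_pos hy)⟩
  · rintro _ ⟨z, hz, rfl⟩
    exact h z hz

lemma exists_isSignCompletion_mul_nonneg {x' : Fin n → ℝ} (h : ∀ i, y i ≠ 0 → 0 < x' i * y i) :
    ∃ z, IsSignCompletion y z ∧ ∀ i, 0 ≤ x' i * z i := by
  refine ⟨fun i => if y i = 0 then (if 0 ≤ x' i then 1 else -1) else y i, fun i => ?_, fun i => ?_⟩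
  · by_cases hy : y i = 0
    · simp only [hy, if_true]
      split_ifs <;> norm_num
    · simp [hy]
  · by_cases hy : y i = 0
    · simp only [hy, if_true]
      split_ifs <;> linarith
    · simpa [hy] using (h i hy).le

end sPlus

noncomputable def signChangesBefore {n : ℕ} (z : Fin (n + 1) → ℝ) (i : Fin (n + 1)) : ℕ :=
  ∑ t : Fin n, if t.castSucc < i ∧ z t.castSucc * z t.succ < 0 then 1 else 0

section signChangesBefore

variable {n : ℕ} (z : Fin (n + 1) → ℝ)

lemma signChangesBefore_zero : signChangesBefore z 0 = 0 := by
  simp [signChangesBefore]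

lemma signChangesBefore_last :
    signChangesBefore z (Fin.last n) = countSignChanges (List.ofFn z) := by
  simp only [signChangesBefore, Fin.castSucc_lt_last, true_and, countSignChanges_ofFn]

lemma signChangesBefore_succ (i : Fin n) :
    signChangesBefore z i.succ =
      signChangesBefore z i.castSucc + if z i.castSucc * z i.succ < 0 then 1 else 0 := by
  have hsplit (t : Fin n) :
      (if t.castSucc < i.succ ∧ z t.castSucc * z t.succ < 0 then 1 else 0) =
        (if t.castSucc < i.castSucc ∧ z t.castSucc * z t.succ < 0 then 1 else 0) +
          if t = i then (if z t.castSucc * z t.succ < 0 then 1 else 0) else 0 := by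
    rcases lt_trichotomy t i with h | rfl | h
    · simp [h, h.le, h.ne]
    · simp
    · simp [h.ne', h.not_ge, h.not_gt]
  rw [signChangesBefore, signChangesBefore, Finset.sum_congr rfl fun t _ => hsplit t,
    Finset.sum_add_distrib, Finset.sum_ite_eq']
  simp

lemma signChangesBefore_mono : Monotone (signChangesBefore z) := fun i i' h =>
  Finset.sum_le_sum fun t _ => by
    split_ifs with h₁ h₂
    · exact le_rfl
    · exact (h₂ ⟨h₁.1.trans_le h, h₁.2⟩).elim
    all_goals omega

lemma signChangesBefore_sign (hz : ∀ i, z i ≠ 0) (i : Fin (n + 1)) :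
    0 < z i * z 0 * (-1) ^ signChangesBefore z i := by
  induction i using Fin.induction with
  | zero => simpa [signChangesBefore_zero] using mul_self_pos.2 (hz 0)
  | succ i ih =>
    rw [signChangesBefore_succ]
    split_ifs with h
    · rw [pow_succ]
      nlinarith [mul_pos ih (neg_pos.2 h), sq_nonneg (z i.castSucc)]
    · have : 0 < z i.castSucc * z i.succ :=
        lt_of_le_of_ne (not_lt.1 h) (mul_ne_zero (hz _) (hz _)).symm
      rw [add_zero]
      nlinarith [mul_pos ih this, sq_nonneg (z i.castSucc)]

lemma exists_signChangesBefore_eq {s : ℕ} {i : Fin (n + 1)} (hs : s ≤ signChangesBefore z i) :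
    ∃ i', signChangesBefore z i' = s := by
  induction i using Fin.induction with
  | zero => exact ⟨0, by rw [signChangesBefore_zero] at hs ⊢; omega⟩
  | succ i ih =>
    rw [signChangesBefore_succ] at hs
    by_cases h : s ≤ signChangesBefore z i.castSucc
    · exact ih h
    · refine ⟨i.succ, ?_⟩
      rw [signChangesBefore_succ]
      split_ifs at hs ⊢ <;> omega

end signChangesBefore

-- `s⁻(v) ≥ k`
def HasSignChanges {n : ℕ} (k : ℕ) (v : Fin n → ℝ) : Prop :=
  ∃ j : Fin (k + 1) → Fin n, StrictMono j ∧ ∀ t : Fin k, v (j t.castSucc) * v (j t.succ) < 0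

-- `s⁻(w) < m`: the nonzero entries of `w` follow the signs of `m` consecutive alternating blocks
def HasSignBlocks {n : ℕ} (m : ℕ) (w : Fin n → ℝ) : Prop :=
  ∃ e : ℕ, ∃ b : Fin n → Fin m, Monotone b ∧ ∀ i, 0 ≤ w i * (-1) ^ (e + (b i : ℕ))

section signPatterns

variable {n k m : ℕ} {v w z : Fin n → ℝ}

lemma HasSignChanges.of_mul_pos (h : HasSignChanges k v) (hwv : ∀ i, 0 < w i * v i) :
    HasSignChanges k w := by
  obtain ⟨j, hj, halt⟩ := h
  exact ⟨j, hj, fun t => by nlinarith [mul_pos (hwv (j t.castSucc)) (hwv (j t.succ)), halt t]⟩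

lemma HasSignChanges.of_succ (h : HasSignChanges (k + 1) v) : HasSignChanges k v := by
  obtain ⟨j, hj, halt⟩ := h
  exact ⟨j ∘ Fin.castSucc, hj.comp Fin.strictMono_castSucc, fun t => halt t.castSucc⟩

lemma HasSignBlocks.mono (h : HasSignBlocks m w) {m' : ℕ} (hm : m ≤ m') : HasSignBlocks m' w := by
  obtain ⟨e, b, hb, hw⟩ := h
  exact ⟨e, Fin.castLE hm ∘ b, (Fin.strictMono_castLE hm).monotone.comp hb, hw⟩

lemma HasSignBlocks.of_mul_nonneg (h : HasSignBlocks m z) (hz : ∀ i, z i ≠ 0)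
    (hwz : ∀ i, 0 ≤ w i * z i) : HasSignBlocks m w := by
  obtain ⟨e, b, hb, hzb⟩ := h
  refine ⟨e, b, hb, fun i => ?_⟩
  have := mul_nonneg (hwz i) (hzb i)
  rw [show w i * z i * (z i * (-1) ^ (e + (b i : ℕ))) =
    z i ^ 2 * (w i * (-1) ^ (e + (b i : ℕ))) by ring] at this
  exact nonneg_of_mul_nonneg_right this (sq_pos_of_ne_zero (hz i))

end signPatterns

section nonvanishing

variable {n : ℕ} {z : Fin (n + 1) → ℝ}

lemma hasSignChanges_countSignChanges (hz : ∀ i, z i ≠ 0) :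
    HasSignChanges (countSignChanges (List.ofFn z)) z := by
  have hex (t : Fin (countSignChanges (List.ofFn z) + 1)) : ∃ i, signChangesBefore z i = t :=
    exists_signChangesBefore_eq z (i := Fin.last n)
      (by rw [signChangesBefore_last]; exact Nat.lt_succ_iff.1 t.isLt)
  choose j hj using hex
  refine ⟨j, fun t t' h => (signChangesBefore_mono z).reflect_lt (by rwa [hj, hj]), fun t => ?_⟩
  have h₁ := signChangesBefore_sign z hz (j t.castSucc)
  have h₂ := signChangesBefore_sign z hz (j t.succ)
  rw [hj, Fin.val_castSucc] at h₁
  rw [hj, Fin.val_succ, pow_succ] at h₂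
  nlinarith [mul_pos h₁ h₂, sq_nonneg (z 0 * (-1) ^ (t : ℕ))]

lemma hasSignBlocks_countSignChanges (hz : ∀ i, z i ≠ 0) :
    HasSignBlocks (countSignChanges (List.ofFn z) + 1) z := by
  obtain ⟨e, he⟩ : ∃ e : ℕ, 0 < z 0 * (-1) ^ e := by
    rcases (hz 0).lt_or_gt with h | h
    · exact ⟨1, by simpa using h⟩
    · exact ⟨0, by simpa using h⟩
  refine ⟨e, fun i => ⟨signChangesBefore z i, ?_⟩, fun i i' h => signChangesBefore_mono z h,
    fun i => ?_⟩
  · rw [Nat.lt_succ_iff, ← signChangesBefore_last]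
    exact signChangesBefore_mono z (Fin.le_last i)
  · have := mul_pos (signChangesBefore_sign z hz i) he
    rw [pow_add]
    nlinarith [sq_nonneg (z 0)]

end nonvanishing

lemma pos_mul_neg_one_pow_of_alternating {k : ℕ} {y : Fin (k + 2) → ℝ}
    (hy : ∀ t : Fin (k + 1), y t.castSucc * y t.succ < 0) (t : Fin (k + 2)) :
    0 < y t * y 0 * (-1) ^ (t : ℕ) := by
  induction t using Fin.induction with
  | zero => simpa using mul_self_pos.2 fun h : y 0 = 0 => (hy 0).ne (by simp [h])
  | succ t ih =>
    rw [Fin.val_castSucc] at ih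
    rw [Fin.val_succ, pow_succ]
    nlinarith [mul_pos ih (neg_pos.2 (hy t)), sq_nonneg (y t.castSucc)]

lemma abs_mul_neg_one_pow_of_nonneg {a : ℝ} {e : ℕ} (h : 0 ≤ a * (-1) ^ e) :
    |a| * (-1) ^ e = a := by
  have := abs_of_nonneg h
  rw [abs_mul, abs_neg_one_pow, mul_one] at this
  rw [this, mul_assoc, ← pow_add, Even.neg_one_pow ⟨e, rfl⟩, mul_one]

lemma exists_sub_smul_zero_of_abs_eq_one {k : ℕ} {W c : Fin k → ℝ} (hW : ∀ s, |W s| = 1)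
    (hc : c ≠ 0) : ∃ τ : ℝ, (∃ s₀, (W - τ • c) s₀ = 0) ∧ ∀ s, 0 ≤ (W - τ • c) s * W s := by
  have : Nonempty (Fin k) := by
    by_contra h
    exact hc (funext fun s => (h ⟨s⟩).elim)
  obtain ⟨s₀, hs₀⟩ := Finite.exists_max fun s => |c s|
  have hcs₀ : 0 < |c s₀| := by
    obtain ⟨s, hs⟩ := Function.ne_iff.1 hc
    exact (abs_pos.2 hs).trans_le (hs₀ s)
  refine ⟨W s₀ / c s₀, ⟨s₀, by simp [div_mul_cancel₀ _ (abs_pos.1 hcs₀)]⟩, fun s => ?_⟩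
  have hτ : |W s₀ / c s₀ * c s| ≤ 1 := by
    rw [abs_mul, abs_div, hW, div_mul_eq_mul_div, one_mul, div_le_one hcs₀]
    exact hs₀ s
  have hWs : W s * W s = 1 := by rw [← abs_mul_abs_self, hW, one_mul]
  have := le_abs_self (W s₀ / c s₀ * c s * W s)
  rw [abs_mul, hW, mul_one] at this
  simp only [Pi.sub_apply, Pi.smul_apply, smul_eq_mul]
  nlinarith

-- The zero entry is dropped and its two neighbouring blocks, which have the same sign, merge.
lemma hasSignBlocks_of_alternating_of_eq_zero {m e : ℕ} {w : Fin (m + 2) → ℝ}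
    (hw : ∀ s, 0 ≤ w s * (-1) ^ (e + (s : ℕ))) {s₀ : Fin (m + 2)} (h₀ : w s₀ = 0) :
    HasSignBlocks (m + 1) w := by
  rcases Nat.eq_zero_or_pos s₀ with hs₀ | hs₀
  · refine ⟨e + 1, fun s => ⟨s - 1, by omega⟩, fun s s' h => by simp; omega, fun s => ?_⟩
    by_cases hs : (s : ℕ) = 0
    · simp [show s = s₀ from Fin.ext (by omega), h₀]
    · simpa [show e + 1 + ((s : ℕ) - 1) = e + s by omega] using hw s
  · refine ⟨e, fun s => ⟨if s < s₀ then s else if s = s₀ then s₀ - 1 else s - 2,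
      by split_ifs <;> omega⟩, fun s s' h => by simp; split_ifs <;> omega, fun s => ?_⟩
    rcases lt_trichotomy s s₀ with hs | rfl | hs
    · simpa [hs] using hw s
    · simp [h₀]
    · have : e + (s : ℕ) = e + ((s : ℕ) - 2) + 2 := by omega
      simpa [hs.not_gt, hs.ne', pow_add, this] using hw s

namespace Matrix

section columnCons

variable {R : Type*} [CommRing R] {m k : ℕ}

lemma of_cons_mulVec (v : Fin m → R) (F : Matrix (Fin m) (Fin k) R) (a : R) (c : Fin k → R) :
    (of fun t => Fin.cons (v t) (F t) : Matrix (Fin m) (Fin (k + 1)) R) *ᵥ Fin.cons a c =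
      a • v + F *ᵥ c := by
  ext t
  simp [mulVec, dotProduct, Fin.sum_univ_succ, mul_comm]

lemma det_of_cons (v : Fin (k + 1) → R) (F : Matrix (Fin (k + 1)) (Fin k) R) :
    (of fun t => Fin.cons (v t) (F t) : Matrix (Fin (k + 1)) (Fin (k + 1)) R).det =
      ∑ t : Fin (k + 1), (-1) ^ (t : ℕ) * v t * (F.submatrix t.succAbove id).det := by
  rw [det_succ_column_zero]
  rfl

end columnCons

lemma exists_mulVec_eq_zero_of_det_submatrix_succAbove_eq_zero {K : Type*} [Field K] {k : ℕ}
    (F : Matrix (Fin (k + 1)) (Fin k) K)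
    (hF : ∀ t : Fin (k + 1), (F.submatrix t.succAbove id).det = 0) :
    ∃ c ≠ 0, F *ᵥ c = 0 := by
  by_contra! hinj
  obtain ⟨v, hv⟩ : ∃ v, v ∉ LinearMap.range F.mulVecLin := by
    by_contra! hsurj
    have := LinearMap.finrank_range_le F.mulVecLin
    rw [LinearMap.range_eq_top.2 fun v => hsurj v, finrank_top, Module.finrank_fin_fun,
      Module.finrank_fin_fun] at this
    omega
  have hdet :
      (of fun t => Fin.cons (v t) (F t) : Matrix (Fin (k + 1)) (Fin (k + 1)) K).det = 0 := by
    simp [det_of_cons, hF]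
  obtain ⟨c, hc, hker⟩ := exists_mulVec_eq_zero_iff.2 hdet
  induction c using Fin.consCases with
  | cons a c =>
  rw [of_cons_mulVec] at hker
  by_cases ha : a = 0
  · subst ha
    refine hinj c (fun h => hc (h ▸ cons_zero_zero)) ?_
    simpa using hker
  · refine hv ⟨-a⁻¹ • c, ?_⟩
    rw [mulVecLin_apply, mulVec_smul, eq_neg_of_add_eq_zero_right hker]
    simp [smul_smul, ha]

lemma det_mul_eq_sum_prod_mul_det_submatrix {R : Type*} [CommRing R] {n p : Type*} [Fintype n]
    [DecidableEq n] [Fintype p] [DecidableEq p] (A : Matrix n p R) (B : Matrix p n R) :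
    (A * B).det = ∑ σ : n → p, (∏ e, B (σ e) e) * (A.submatrix id σ).det := by
  have hrows : (A * B)ᵀ = fun e => ∑ i, B i e • Aᵀ i := by
    ext e a
    simp [mul_apply, Finset.sum_apply, mul_comm]
  rw [← det_transpose, hrows]
  have := (detRowAlternating (n := n) (R := R)).toMultilinearMap.map_sum fun e i => B i e • Aᵀ i
  simp only [AlternatingMap.coe_multilinearMap, AlternatingMap.map_smul_univ] at this
  refine this.trans (Finset.sum_congr rfl fun σ _ => ?_)
  rw [smul_eq_mul, ← det_transpose (A.submatrix id σ)]
  rfl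

def blockMatrix {p m : ℕ} (b : Fin p → Fin m) (a : Fin p → ℝ) : Matrix (Fin p) (Fin m) ℝ :=
  of fun i s => if b i = s then a i else 0

lemma blockMatrix_mulVec {p m : ℕ} (b : Fin p → Fin m) (a : Fin p → ℝ) (v : Fin m → ℝ) :
    blockMatrix b a *ᵥ v = fun i => a i * v (b i) := by
  ext i
  simp [blockMatrix, mulVec, dotProduct]

end Matrix

def RectTotallyNonneg {q p : ℕ} (E : Matrix (Fin q) (Fin p) ℝ) : Prop :=
  ∀ (k : ℕ) (r : Fin k → Fin q) (c : Fin k → Fin p), StrictMono r → StrictMono c →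
    0 ≤ (E.submatrix r c).det

namespace RectTotallyNonneg

variable {q p : ℕ} {E : Matrix (Fin q) (Fin p) ℝ}

lemma entry_nonneg (hE : RectTotallyNonneg E) (i : Fin q) (j : Fin p) : 0 ≤ E i j := by
  simpa using hE 1 (fun _ => i) (fun _ => j) (Subsingleton.strictMono _) (Subsingleton.strictMono _)

lemma submatrix (hE : RectTotallyNonneg E) {q' p' : ℕ} {r : Fin q' → Fin q} {c : Fin p' → Fin p}
    (hr : StrictMono r) (hc : StrictMono c) : RectTotallyNonneg (E.submatrix r c) :=
  fun k r' c' hr' hc' => by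
    simpa [submatrix_submatrix] using hE k (r ∘ r') (c ∘ c') (hr.comp hr') (hc.comp hc')

lemma mul_blockMatrix (hE : RectTotallyNonneg E) {m : ℕ} {b : Fin p → Fin m} (hb : Monotone b)
    {a : Fin p → ℝ} (ha : ∀ i, 0 ≤ a i) : RectTotallyNonneg (E * blockMatrix b a) := by
  intro k r c hr hc
  rw [submatrix_mul _ _ _ id _ Function.bijective_id, det_mul_eq_sum_prod_mul_det_submatrix]
  refine Finset.sum_nonneg fun σ _ => ?_
  by_cases h : ∀ e, b (σ e) = c e
  · have hσ : StrictMono σ := fun e e' hee' => hb.reflect_lt (by rw [h, h]; exact hc hee')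
    refine mul_nonneg (Finset.prod_nonneg fun e _ => by simp [blockMatrix, h, ha]) ?_
    simpa [submatrix_submatrix] using hE k r σ hr hσ
  · push Not at h
    obtain ⟨e, he⟩ := h
    rw [Finset.prod_eq_zero (Finset.mem_univ e) (by simp [blockMatrix, he]), zero_mul]

-- Expanding the singular matrix `[F u | F]` along its first column gives a sum of nonnegative
-- terms: the `(-1) ^ t * (F u) t` all have the sign of `(F u) 0`, and the minors are nonnegative.
lemma det_submatrix_succAbove_eq_zero {k : ℕ} {F : Matrix (Fin (k + 2)) (Fin (k + 1)) ℝ}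
    (hF : RectTotallyNonneg F) {u : Fin (k + 1) → ℝ}
    (hy : ∀ t : Fin (k + 1), (F *ᵥ u) t.castSucc * (F *ᵥ u) t.succ < 0) (t : Fin (k + 2)) :
    (F.submatrix t.succAbove id).det = 0 := by
  set y := F *ᵥ u
  have hsing : (of fun t => Fin.cons (y t) (F t) : Matrix (Fin (k + 2)) (Fin (k + 2)) ℝ).det = 0 :=
    exists_mulVec_eq_zero_iff.1 ⟨Fin.cons (-1) u, fun h => by simpa using congrFun h 0,
      by rw [of_cons_mulVec, neg_one_smul, neg_add_cancel]⟩
  have hminor (t : Fin (k + 2)) : 0 ≤ (F.submatrix t.succAbove id).det :=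
    hF _ t.succAbove id (Fin.strictMono_succAbove t) strictMono_id
  have hsum :
      ∑ t : Fin (k + 2), y t * y 0 * (-1) ^ (t : ℕ) * (F.submatrix t.succAbove id).det = 0 := by
    rw [det_of_cons] at hsing
    rw [← zero_mul (y 0), ← hsing, Finset.sum_mul]
    exact Finset.sum_congr rfl fun t _ => by ring
  have := (Finset.sum_eq_zero_iff_of_nonneg fun t _ =>
    mul_nonneg (pos_mul_neg_one_pow_of_alternating hy t).le (hminor t)).1 hsum t (Finset.mem_univ t)
  exact (mul_eq_zero.1 this).resolve_left (pos_mul_neg_one_pow_of_alternating hy t).ne'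

theorem not_hasSignChanges_mulVec (m : ℕ) {q p : ℕ} {E : Matrix (Fin q) (Fin p) ℝ}
    (hE : RectTotallyNonneg E) {w : Fin p → ℝ} (hw : HasSignBlocks (m + 1) w) :
    ¬HasSignChanges (m + 1) (E *ᵥ w) := by
  induction m generalizing q p with
  | zero =>
    rintro ⟨j, -, halt⟩
    obtain ⟨e, b, -, hwb⟩ := hw
    have hsign (r : Fin q) : 0 ≤ (E *ᵥ w) r * (-1) ^ e := by
      rw [mulVec, dotProduct, Finset.sum_mul]
      refine Finset.sum_nonneg fun i _ => ?_
      simpa [Fin.fin_one_eq_zero (b i), mul_assoc] using mul_nonneg (hE.entry_nonneg r i) (hwb i)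
    have key := mul_nonneg (hsign (j (0 : Fin 1).castSucc)) (hsign (j (0 : Fin 1).succ))
    rw [mul_mul_mul_comm, ← pow_add, Even.neg_one_pow ⟨e, rfl⟩, mul_one] at key
    exact (halt 0).not_ge key
  | succ m ih =>
    rintro ⟨j, hj, halt⟩
    obtain ⟨e, b, hb, hwb⟩ := hw
    set D := (E * blockMatrix b fun i => |w i|).submatrix j id
    have hD : RectTotallyNonneg D :=
      (hE.mul_blockMatrix hb fun i => abs_nonneg _).submatrix hj strictMono_id
    set W : Fin (m + 2) → ℝ := fun s => (-1) ^ (e + (s : ℕ))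
    have hDW : D *ᵥ W = fun t => (E *ᵥ w) (j t) := by
      ext t
      change ((E * blockMatrix b fun i => |w i|) *ᵥ W) (j t) = _
      rw [← mulVec_mulVec, blockMatrix_mulVec]
      congr
      ext i
      exact abs_mul_neg_one_pow_of_nonneg (hwb i)
    have halt' : ∀ t : Fin (m + 2), (D *ᵥ W) t.castSucc * (D *ᵥ W) t.succ < 0 := by
      rw [hDW]
      exact halt
    obtain ⟨c, hc, hDc⟩ := exists_mulVec_eq_zero_of_det_submatrix_succAbove_eq_zero D
      (hD.det_submatrix_succAbove_eq_zero halt')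
    obtain ⟨τ, ⟨s₀, hs₀⟩, hτ⟩ := exists_sub_smul_zero_of_abs_eq_one (W := W)
      (fun s => abs_neg_one_pow _) hc
    refine ih hD (hasSignBlocks_of_alternating_of_eq_zero hτ hs₀) ?_
    rw [mulVec_sub, mulVec_smul, hDc, smul_zero, sub_zero]
    exact HasSignChanges.of_succ ⟨id, strictMono_id, halt'⟩

end RectTotallyNonneg

lemma exists_perturbation_of_isSignCompletion {n : ℕ} {A : Matrix (Fin n) (Fin n) ℝ}
    (hA : IsUnit A.det) (x : Fin n → ℝ) {z : Fin n → ℝ} (hz : IsSignCompletion (A *ᵥ x) z) :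
    ∃ x' : Fin n → ℝ, (∀ i, 0 < (A *ᵥ x') i * z i) ∧ ∀ i, x i ≠ 0 → 0 < x' i * x i := by
  set v : Fin n → ℝ := fun i => if (A *ᵥ x) i = 0 then z i else 0
  set u := A⁻¹ *ᵥ v
  have hclose : ∀ᶠ δ in 𝓝 (0 : ℝ), ∀ i, x i ≠ 0 → 0 < (x + δ • u) i * x i := by
    refine eventually_all.2 fun i => ?_
    by_cases hx : x i = 0
    · exact Eventually.of_forall fun _ h => (h hx).elim
    · have : Tendsto (fun δ : ℝ => (x + δ • u) i * x i) (𝓝 0) (𝓝 (x i * x i)) :=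
        (by fun_prop : Continuous fun δ : ℝ => (x i + δ * u i) * x i).tendsto' 0 _ (by simp)
      exact (this.eventually (lt_mem_nhds (mul_self_pos.2 hx))).mono fun _ h _ => h
  obtain ⟨δ, hδ, hδpos⟩ := ((hclose.filter_mono nhdsWithin_le_nhds).and
    (self_mem_nhdsWithin : ∀ᶠ δ in 𝓝[>] (0 : ℝ), 0 < δ)).exists
  refine ⟨x + δ • u, fun i => ?_, hδ⟩
  rw [mulVec_add, mulVec_smul, mulVec_mulVec, mul_nonsing_inv _ hA, one_mulVec]
  by_cases hy : (A *ᵥ x) i = 0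
  · simpa [v, hy, mul_assoc] using mul_pos hδpos (mul_self_pos.2 (hz.ne_zero i))
  · simp [v, hy, (hz i).1 hy]

theorem tn_nonsingular_sPlus_svdp {n : ℕ} (A : Matrix (Fin n) (Fin n) ℝ)
    (hA : TotallyNonneg A) (hdet : IsUnit A.det) :
    ∀ x : Fin n → ℝ, sPlus (A.mulVec x) ≤ sPlus x := by
  intro x
  refine sPlus_le fun z hz => ?_
  obtain ⟨x', hAx', hx'⟩ := exists_perturbation_of_isSignCompletion hdet x hz
  obtain ⟨z', hz', hx'z'⟩ := exists_isSignCompletion_mul_nonneg hx'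
  refine le_trans ?_ (le_sPlus hz')
  by_contra! hlt
  obtain ⟨m, hm⟩ : ∃ m, countSignChanges (List.ofFn z) = m + 1 :=
    Nat.exists_eq_succ_of_ne_zero (by omega)
  obtain ⟨n, rfl⟩ : ∃ n', n = n' + 1 :=
    Nat.exists_eq_succ_of_ne_zero (by rintro rfl; simp [countSignChanges] at hm)
  refine RectTotallyNonneg.not_hasSignChanges_mulVec m hA (w := x') ?_ ?_
  · exact ((hasSignBlocks_countSignChanges hz'.ne_zero).mono (by omega)).of_mul_nonneg
      hz'.ne_zero hx'z'
  · exact hm ▸ (hasSignChanges_countSignChanges hz.ne_zero).of_mul_pos hAx'
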